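/- arXiv:2110.04874 — 6 statements merged into one kernel-verified Lean document; each statement's English description precedes it below -/
import Mathlib

section
/- Duality principle (determinantal form): let $A$ be an $n\times n$ matrix with entries in $\{0,1\}$ such that every column of $A$ sums to $d$, and let $A^\vee = J - A$ where $J$ is the all-ones matrix. Then every column of $A^\vee$ sums to $n-d$, and $\det A = \pm d$ if and only if $\det A^\vee = \pm (n-d)$. -/
/-!
Replacing a row of `A` by the sum of all rows, which is the constant vector `d`, gives
`det A = d * e`, where `e` is the determinant of `A` with that row replaced by ones. In `J - A`
with the same row replaced by ones, subtracting that row from every other row leaves `-A`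
there, so `det (J - A) = ± (n - d) * e`. Since `d` and `n - d` are nonzero, both conditions
say `|e| = 1`.
-/

namespace Matrix

variable {ι R : Type*} [Fintype ι] [DecidableEq ι] [CommRing R]

theorem det_eq_mul_det_updateRow_one (M : Matrix ι ι R) {c : R} (hM : ∀ j, ∑ i, M i j = c)
    (i₀ : ι) : M.det = c * (M.updateRow i₀ 1).det := by
  have hrows : ∑ k, M k = c • 1 := by
    ext j
    simpa using (Finset.sum_apply j Finset.univ fun k => M k).trans (hM j)
  have hsum := det_updateRow_sum M i₀ 1
  simp only [Pi.one_apply, one_smul] at hsum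
  rw [hrows, det_updateRow_smul] at hsum
  exact hsum.symm

theorem det_one_sub_updateRow_one (M : Matrix ι ι R) (i₀ : ι) :
    ((of fun i j => 1 - M i j).updateRow i₀ 1).det =
      -(-1) ^ Fintype.card ι * (M.updateRow i₀ 1).det := by
  have hsub : ((of fun i j => 1 - M i j).updateRow i₀ 1).det = (-M.updateRow i₀ (-1)).det := by
    refine det_eq_of_forall_row_eq_smul_add_const (fun i => if i = i₀ then 0 else 1) i₀
      (if_pos rfl) fun i j => ?_
    by_cases hi : i = i₀
    · simp [updateRow_apply, hi]
    · simp [updateRow_apply, hi, sub_eq_neg_add]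
  rw [hsub, det_neg, ← neg_one_smul R (1 : ι → R), det_updateRow_smul]
  ring

end Matrix

theorem duality_principle_det_general (n : ℕ) (d : ℤ) (hd1 : 1 ≤ d) (hdn : d < n)
    (A : Matrix (Fin n) (Fin n) ℤ)
    (hcol : ∀ j, ∑ i, A i j = d) :
    (∀ j, ∑ i, (1 - A i j) = (n : ℤ) - d) ∧
    ((A.det = d ∨ A.det = -d) ↔
      ((Matrix.of fun i j => 1 - A i j).det = (n : ℤ) - d ∨
       (Matrix.of fun i j => 1 - A i j).det = -((n : ℤ) - d))) := by
  have hcolB : ∀ j, ∑ i, (1 - A i j) = (n : ℤ) - d := fun j => by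
    simp [Finset.sum_sub_distrib, hcol j]
  refine ⟨hcolB, ?_⟩
  let i₀ : Fin n := ⟨0, by omega⟩
  have hA := A.det_eq_mul_det_updateRow_one hcol i₀
  have hB := (Matrix.of fun i j => 1 - A i j).det_eq_mul_det_updateRow_one hcolB i₀
  rw [Matrix.det_one_sub_updateRow_one] at hB
  have hd : d.natAbs ≠ 0 := by omega
  have hnd : ((n : ℤ) - d).natAbs ≠ 0 := by omega
  simp only [← Int.natAbs_eq_natAbs_iff, hA, hB, Int.natAbs_mul, Int.natAbs_neg, Int.natAbs_pow,
    Int.natAbs_one, one_pow, one_mul, Nat.mul_eq_left hd, Nat.mul_eq_left hnd]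

/-- Duality principle, determinantal form: if `A` is an `n × n` `0/1` matrix with
all column sums `d` (with `1 ≤ d < n`), then the columns of `A^∨ = J - A` sum to
`n - d`, and `det A = ± d` if and only if `det A^∨ = ± (n - d)`. -/
theorem duality_principle_det (n : ℕ) (d : ℤ) (hd1 : 1 ≤ d) (hdn : d < n)
    (A : Matrix (Fin n) (Fin n) ℤ)
    (h01 : ∀ i j, A i j = 0 ∨ A i j = 1)
    (hcol : ∀ j, ∑ i, A i j = d) :
    (∀ j, ∑ i, (1 - A i j) = (n : ℤ) - d) ∧
    ((A.det = d ∨ A.det = -d) ↔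
      ((Matrix.of fun i j => 1 - A i j).det = (n : ℤ) - d ∨
       (Matrix.of fun i j => 1 - A i j).det = -((n : ℤ) - d))) :=
  duality_principle_det_general n d hd1 hdn A hcol
end

section
/- Let $F=\{x_1x_2x_3,\ x_1x_4x_5,\ x_2x_4x_6,\ x_3x_5x_6,\ f_5,\ f_6\}$ where $f_5, f_6$ are arbitrary square-free cubic monomials in $\mathbb{K}[x_1,\dots,x_6]$. Then the determinant of the $6\times 6$ log matrix of $F$ is even. In particular, $F$ is not a Cremona set (its determinant cannot be $\pm 3$). -/
set_option maxRecDepth 4000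

private lemma cons_val_five' {α : Type*} (x : α) (u : Fin 5 → α) :
    Matrix.vecCons x u 5 = u 4 := rfl

/-- The log matrix of any set `{x₁x₂x₃, x₁x₄x₅, x₂x₄x₆, x₃x₅x₆, f₅, f₆}` of square-free
cubic monomials in six variables has even determinant; in particular it is never `± 3`. -/
theorem det_even_of_special_columns (A : Matrix (Fin 6) (Fin 6) ℤ)
    (hc0 : ∀ i, A i 0 = ![1, 1, 1, 0, 0, 0] i)
    (hc1 : ∀ i, A i 1 = ![1, 0, 0, 1, 1, 0] i)
    (hc2 : ∀ i, A i 2 = ![0, 1, 0, 1, 0, 1] i)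
    (hc3 : ∀ i, A i 3 = ![0, 0, 1, 0, 1, 1] i)
    (h45 : ∀ j : Fin 6, j = 4 ∨ j = 5 →
      (∀ i, A i j = 0 ∨ A i j = 1) ∧ ∑ i, A i j = 3) :
    (2 : ℤ) ∣ A.det ∧ A.det ≠ 3 ∧ A.det ≠ -3 := by
  have hdvd : (2 : ℤ) ∣ A.det := by
    have h2 : ((A.det : ℤ) : ZMod 2) = 0 := by
      have key : (A.map (Int.cast : ℤ → ZMod 2)).det = 0 := by
        rw [Matrix.exists_mulVec_eq_zero_iff.symm]
        refine ⟨![1, 1, 1, 1, 0, 0], ?_, ?_⟩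
        · intro h
          have := congrFun h 0
          simp at this
        · funext i
          have e0 := hc0 i; have e1 := hc1 i; have e2 := hc2 i; have e3 := hc3 i
          simp only [Matrix.mulVec, dotProduct, Fin.sum_univ_six,
            Matrix.map_apply, Matrix.cons_val_zero, Matrix.cons_val_one, Matrix.head_cons,
            Matrix.cons_val_two, Matrix.tail_cons, Matrix.cons_val_three,
            Matrix.cons_val_four, cons_val_five', Matrix.cons_val_fin_one,
            Matrix.head_fin_const]
          rw [e0, e1, e2, e3]
          fin_cases i <;>
            · simp only [Matrix.cons_val_zero, Matrix.cons_val_one, Matrix.head_cons,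
                Matrix.cons_val_two, Matrix.tail_cons, Matrix.cons_val_three,
                Matrix.cons_val_four, cons_val_five', Matrix.head_fin_const]
              ring_nf
              decide
      have hm := RingHom.map_det (Int.castRingHom (ZMod 2)) A
      simp only [RingHom.mapMatrix_apply, Int.coe_castRingHom] at hm
      rw [hm]
      convert key using 3
    exact (ZMod.intCast_zmod_eq_zero_iff_dvd _ 2).mp h2
  refine ⟨hdvd, ?_, ?_⟩ <;> rintro h <;> rw [h] at hdvd <;> omega
end

section
/- Lemma (pairs with gcd of degree 2): if $F=\{f_1,\dots,f_6\}$ is a set of six square-free cubic monomials in $\mathbb{K}[x_1,\dots,x_6]$ whose log matrix has determinant $\pm 3$, then among any four monomials of $F$ there exist two whose greatest common divisor has degree $2$ (i.e., the corresponding $0/1$ exponent vectors share at least two common positions equal to $1$). -/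
set_option maxRecDepth 4000


/-- If six square-free cubic monomials in six variables (i.e. six `3`-subsets of
`{1, …, 6}`) have log matrix of determinant `± 3`, then among any four of them two
share a common divisor of degree `2` (the corresponding `3`-sets meet in `≥ 2` points). -/
theorem exists_pair_gcd_deg_two (e : Fin 6 → Finset (Fin 6))
    (hcard : ∀ j, (e j).card = 3)
    (A : Matrix (Fin 6) (Fin 6) ℤ)
    (hA : ∀ i j, A i j = if i ∈ e j then 1 else 0)
    (hdet : A.det = 3 ∨ A.det = -3) :
    ∀ s : Finset (Fin 6), s.card = 4 →
      ∃ a ∈ s, ∃ b ∈ s, a ≠ b ∧ 2 ≤ (e a ∩ e b).card := by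
  intro s hs
  by_contra hcon
  push_neg at hcon
  have hle : ∀ a ∈ s, ∀ b ∈ s, a ≠ b → (e a ∩ e b).card ≤ 1 := by
    intro a ha b hb hab
    have := hcon a ha b hb hab
    omega
  -- the degree of a point: in how many of the four sets it lies
  set d : Fin 6 → ℕ := fun p => (s.filter (fun a => p ∈ e a)).card with hd
  have hdsum : ∀ p, d p = ∑ a ∈ s, (if p ∈ e a then 1 else 0) := by
    intro p
    exact Finset.card_filter _ _
  -- total degree is 12
  have hsum : ∑ p : Fin 6, d p = 12 := by
    have : ∑ p : Fin 6, d p = ∑ a ∈ s, (e a).card := by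
      simp only [hdsum]
      rw [Finset.sum_comm]
      refine Finset.sum_congr rfl fun a _ => ?_
      rw [Finset.sum_ite_mem]
      simp
    rw [this]
    rw [Finset.sum_congr rfl fun a _ => hcard a]
    simp [hs]
  -- sum of squares of degrees is ≤ 24
  have hsq : ∑ p : Fin 6, d p * d p ≤ 24 := by
    have h1 : ∑ p : Fin 6, d p * d p = ∑ a ∈ s, ∑ b ∈ s, (e a ∩ e b).card := by
      have : ∀ p : Fin 6, d p * d p
          = ∑ a ∈ s, ∑ b ∈ s, (if p ∈ e a ∩ e b then 1 else 0) := by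
        intro p
        rw [hdsum, Finset.sum_mul_sum]
        refine Finset.sum_congr rfl fun a _ => Finset.sum_congr rfl fun b _ => ?_
        by_cases h1 : p ∈ e a <;> by_cases h2 : p ∈ e b <;>
          simp [h1, h2, Finset.mem_inter]
      simp only [this]
      rw [Finset.sum_comm]
      refine Finset.sum_congr rfl fun a _ => ?_
      rw [Finset.sum_comm]
      refine Finset.sum_congr rfl fun b _ => ?_
      rw [Finset.sum_ite_mem]
      simp
    rw [h1]
    have h2 : ∀ a ∈ s, ∑ b ∈ s, (e a ∩ e b).card ≤ 6 := by
      intro a ha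
      rw [← Finset.add_sum_erase _ _ ha]
      have h3 : (e a ∩ e a).card = 3 := by simp [hcard a]
      have h4 : ∑ b ∈ s.erase a, (e a ∩ e b).card ≤ 3 := by
        calc ∑ b ∈ s.erase a, (e a ∩ e b).card
            ≤ ∑ b ∈ s.erase a, 1 := by
              refine Finset.sum_le_sum fun b hb => ?_
              exact hle a ha b (Finset.mem_of_mem_erase hb)
                (fun h => (Finset.ne_of_mem_erase hb) h.symm)
          _ = (s.erase a).card := by simp
          _ ≤ 3 := by rw [Finset.card_erase_of_mem ha, hs]
      omega
    calc ∑ a ∈ s, ∑ b ∈ s, (e a ∩ e b).card ≤ ∑ a ∈ s, 6 :=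
          Finset.sum_le_sum h2
      _ = 24 := by simp [hs]
  -- hence every point has degree exactly 2
  have hdeg : ∀ p : Fin 6, d p = 2 := by
    have hZ : ∑ p : Fin 6, ((d p : ℤ) - 2) ^ 2 ≤ 0 := by
      have : ∑ p : Fin 6, ((d p : ℤ) - 2) ^ 2
          = (∑ p : Fin 6, ((d p : ℤ) * d p)) - 4 * (∑ p : Fin 6, (d p : ℤ)) + 24 := by
        rw [Finset.sum_congr rfl (fun p _ => by ring :
          ∀ p ∈ Finset.univ, ((d p : ℤ) - 2) ^ 2 = (d p : ℤ) * d p - 4 * (d p : ℤ) + 4)]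
        rw [Finset.sum_add_distrib, Finset.sum_sub_distrib, Finset.mul_sum]
        simp [Finset.mul_sum]
      rw [this]
      have c1 : (∑ p : Fin 6, ((d p : ℤ) * d p)) ≤ 24 := by
        exact_mod_cast hsq
      have c2 : (∑ p : Fin 6, (d p : ℤ)) = 12 := by
        have := hsum
        exact_mod_cast this
      rw [c2]
      omega
    intro p
    have hzero : ∀ q ∈ (Finset.univ : Finset (Fin 6)), ((d q : ℤ) - 2) ^ 2 = 0 := by
      have hge : 0 ≤ ∑ p : Fin 6, ((d p : ℤ) - 2) ^ 2 :=
        Finset.sum_nonneg fun q _ => sq_nonneg _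
      have heq : ∑ p : Fin 6, ((d p : ℤ) - 2) ^ 2 = 0 := le_antisymm hZ hge
      exact (Finset.sum_eq_zero_iff_of_nonneg fun q _ => sq_nonneg _).mp heq
    have := hzero p (Finset.mem_univ p)
    have : (d p : ℤ) - 2 = 0 := by
      exact pow_eq_zero_iff (by norm_num) |>.mp this
    omega
  -- replace one of the four columns by the sum of all four: every entry becomes 2,
  -- hence 2 ∣ det A, contradicting det A = ± 3
  obtain ⟨a0, ha0⟩ := Finset.card_pos.mp (by rw [hs]; norm_num : 0 < s.card)
  set c : Fin 6 → ℤ := fun i => if i ∈ s then 1 else 0 with hc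
  have h1 := Matrix.det_updateCol_sum A a0 c
  have hca0 : c a0 = 1 := by simp [hc, ha0]
  rw [hca0, one_smul] at h1
  have hg : (fun k => ∑ i, c i • A k i) = fun _ : Fin 6 => (2 : ℤ) := by
    funext k
    have : ∀ i : Fin 6, c i • A k i = if i ∈ s then (if k ∈ e i then (1:ℤ) else 0) else 0 := by
      intro i
      rw [hA]
      by_cases h1 : i ∈ s <;> by_cases h2 : k ∈ e i <;> simp [hc, h1, h2]
    rw [Finset.sum_congr rfl fun i _ => this i, Finset.sum_ite_mem, Finset.univ_inter]
    have h2 : ∑ i ∈ s, (if k ∈ e i then (1:ℤ) else 0)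
        = ((s.filter fun i => k ∈ e i).card : ℤ) := by
      rw [Finset.card_filter]
      push_cast
      rfl
    rw [h2]
    have h3 : (s.filter fun i => k ∈ e i).card = 2 := hdeg k
    rw [h3]
    norm_num
  simp only [hg] at h1
  have h5 := Matrix.det_updateCol_smul A a0 (2:ℤ) (fun _ : Fin 6 => (1:ℤ))
  simp only [Pi.smul_def, smul_eq_mul, mul_one] at h5
  have hdvd : (2 : ℤ) ∣ A.det := ⟨_, (h1.symm.trans h5)⟩
  rcases hdet with h | h <;> rw [h] at hdvd <;> omega
end

section
/- No $6\times 6$ matrix with entries in $\{0,1\}$ all of whose rows and columns sum to $3$ has determinant $\pm 3$. -/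
/-- `9` divides the determinant of a doubly `3`-stochastic `6 × 6` integer matrix. -/
lemma nine_dvd_det (A : Matrix (Fin 6) (Fin 6) ℤ)
    (hrow : ∀ i, ∑ j, A i j = 3)
    (hcol : ∀ j, ∑ i, A i j = 3) :
    (9 : ℤ) ∣ A.det := by
  -- replace column 0 by the sum of all columns
  have h1 : (A.updateCol 0 (fun k ↦ ∑ i, (1 : ℤ) • A k i)).det = A.det := by
    rw [Matrix.det_updateCol_sum A 0 (fun _ => (1:ℤ)), one_smul]
  have hfun : (fun k ↦ ∑ i, (1 : ℤ) • A k i) = (3 : ℤ) • (fun _ : Fin 6 => (1 : ℤ)) := by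
    funext k
    simpa using hrow k
  set C : Matrix (Fin 6) (Fin 6) ℤ := A.updateCol 0 (fun _ => (1 : ℤ)) with hC
  have h2 : A.det = 3 * C.det := by
    rw [← h1, hfun, Matrix.det_updateCol_smul]
  -- replace row 0 of C by the sum of all rows
  have h3 : (C.updateRow 0 (∑ k, (1 : ℤ) • C k)).det = C.det := by
    rw [Matrix.det_updateRow_sum C 0 (fun _ => (1:ℤ)), one_smul]
  set v : Fin 6 → ℤ := fun j => if j = 0 then 2 else 1 with hv
  have hsum : (∑ k, (1 : ℤ) • C k) = (3 : ℤ) • v := by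
    funext j
    rw [Finset.sum_apply]
    by_cases hj : j = 0
    · subst hj
      simp [hC, hv, Matrix.updateCol_apply, Finset.sum_apply]
    · simp only [Finset.sum_apply, Pi.smul_apply, one_smul, hv, hj, if_false]
      have hCA : ∀ k, C k j = A k j := by
        intro k; simp [hC, Matrix.updateCol_apply, hj]
      simp only [hCA, hcol j]; norm_num
  have h4 : C.det = 3 * (C.updateRow 0 v).det := by
    rw [← h3, hsum, Matrix.det_updateRow_smul]
  rw [h2, h4]
  exact ⟨(C.updateRow 0 v).det, by ring⟩

/-- No `6 × 6` `0/1` matrix all of whose rows and columns sum to `3` (a doubly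
`3`-stochastic log matrix) has determinant `± 3`. -/
theorem no_doubly_stochastic_cremona (A : Matrix (Fin 6) (Fin 6) ℤ)
    (h01 : ∀ i j, A i j = 0 ∨ A i j = 1)
    (hrow : ∀ i, ∑ j, A i j = 3)
    (hcol : ∀ j, ∑ i, A i j = 3) :
    A.det ≠ 3 ∧ A.det ≠ -3 := by
  obtain ⟨m, hm⟩ := nine_dvd_det A hrow hcol
  constructor <;> intro h <;> rw [h] at hm <;> omega
end

section
/- Orbit-generation lemma: let a group $G$ act transitively on a set $X$ and consider the induced action on $(i+1)$-element subsets. For every $(i+1)$-element subset $H \subseteq X$ and every system of orbit representatives $F_1,\dots,F_r$ for the action on $i$-element subsets, there exist an index $j$, an element $f \in X \setminus F_j$, and $\beta \in G$ such that $H$ is in the same orbit as $F_j \cup \{\beta * f\}$. -/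
open Pointwise

/-- Orbit-generation lemma: if `G` acts transitively on `X` and `F₁, …, F_r` is a system
of orbit representatives for the induced action on `i`-element subsets, then every
`(i+1)`-element subset `H` is in the same orbit as some `F_j ∪ {β • f}` with `f ∉ F_j`. -/
theorem orbit_generation {G X : Type*} [Group G] [MulAction G X] [DecidableEq X]
    (htrans : ∀ x y : X, ∃ g : G, g • x = y)
    (i r : ℕ) (F : Fin r → Finset X) (hcard : ∀ j, (F j).card = i)
    (hrep : ∀ S : Finset X, S.card = i → ∃! j : Fin r, ∃ g : G, g • F j = S) :
    ∀ H : Finset X, H.card = i + 1 →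
      ∃ (j : Fin r) (f : X), f ∉ F j ∧ ∃ (β g : G), g • (F j ∪ {β • f}) = H := by
  intro H hH
  have hne : H.Nonempty := by
    rw [← Finset.card_pos, hH]; omega
  obtain ⟨h, hh⟩ := hne
  set S := H.erase h with hS
  have hScard : S.card = i := by
    simp [hS, Finset.card_erase_of_mem hh, hH]
  obtain ⟨j, ⟨g, hg⟩, -⟩ := hrep S hScard
  refine ⟨j, g⁻¹ • h, ?_, 1, g, ?_⟩
  · intro hmem
    have : h ∈ S := by
      rw [← hg]
      have := Finset.smul_mem_smul_finset (a := g) hmem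
      simpa using this
    exact Finset.notMem_erase h H this
  · rw [one_smul, Finset.smul_finset_union, hg, Finset.smul_finset_singleton, smul_inv_smul]
    have : S ∪ {h} = H := by
      ext x
      simp only [Finset.mem_union, Finset.mem_singleton, hS, Finset.mem_erase]
      constructor
      · rintro (⟨-, hx⟩ | rfl) <;> [exact hx; exact hh]
      · intro hx
        by_cases hxh : x = h
        · exact Or.inr hxh
        · exact Or.inl ⟨hxh, hx⟩
    exact this
end

section
/- Classification of quadratic monomial Cremona sets (graph form, square-free connected case): let $G$ be a connected graph on $n$ vertices with exactly $n$ edges (no loops, no multiple edges), and let $A$ be its $n\times n$ vertex-edge incidence matrix. Then $\det A = \pm 2$ if and only if the unique cycle of $G$ has odd length; and $\det A = 0$ if the unique cycle has even length. -/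
variable {V : Type*} {G : SimpleGraph V}

lemma walk_getVert_support_get {u v : V} (p : G.Walk u v) (i : ℕ) (h : i < p.support.length) :
    p.getVert i = p.support.get ⟨i, h⟩ := by
  induction p generalizing i with
  | nil =>
    simp only [SimpleGraph.Walk.support_nil, List.length_singleton] at h
    interval_cases i
    rfl
  | cons hadj q ih =>
    cases i with
    | zero => rfl
    | succ k =>
      simp only [SimpleGraph.Walk.support_cons] at h ⊢
      rw [SimpleGraph.Walk.getVert_cons_succ]
      exact ih k (by simpa using Nat.lt_of_succ_lt_succ h)

lemma walk_edges_get {u v : V} (p : G.Walk u v) (i : ℕ) (h : i < p.edges.length) :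
    p.edges.get ⟨i, h⟩ = s(p.getVert i, p.getVert (i+1)) := by
  induction p generalizing i with
  | nil => simp at h
  | cons hadj q ih =>
    cases i with
    | zero =>
      simp [SimpleGraph.Walk.getVert_cons_succ, SimpleGraph.Walk.getVert_zero]
    | succ k =>
      simp only [SimpleGraph.Walk.edges_cons] at h ⊢
      rw [SimpleGraph.Walk.getVert_cons_succ, SimpleGraph.Walk.getVert_cons_succ]
      exact ih k (by simpa using Nat.lt_of_succ_lt_succ h)

open Matrix in
lemma detCycle (m : ℕ) (hm : 2 ≤ m) (N : Matrix (Fin (m+1)) (Fin (m+1)) ℤ)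
    (hN : ∀ i j, N i j = if i = j ∨ (j:ℕ) = ((i:ℕ)+1) % (m+1) then 1 else 0) :
    N.det = 1 + (-1)^m := by
  have hlast : ((⟨m, by omega⟩ : Fin (m+1)) : ℕ) = m := rfl
  rw [Matrix.det_succ_column_zero]
  have hzero : ∀ i : Fin (m+1), i ∉ ({0, ⟨m, by omega⟩} : Finset (Fin (m+1))) →
      (-1 : ℤ)^(i:ℕ) * N i 0 * (N.submatrix i.succAbove Fin.succ).det = 0 := by
    intro i hi
    simp only [Finset.mem_insert, Finset.mem_singleton] at hi
    push_neg at hi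
    obtain ⟨h1, h2⟩ := hi
    have hi1 : (i:ℕ) ≠ 0 := fun h => h1 (Fin.ext h)
    have hi2 : (i:ℕ) ≠ m := fun h => h2 (Fin.ext h)
    have hi3 : (i:ℕ) < m + 1 := i.isLt
    have : N i 0 = 0 := by
      rw [hN, if_neg]
      rintro (h | h)
      · exact h1 h
      · rw [Fin.val_zero, Nat.mod_eq_of_lt (by omega)] at h
        omega
    rw [this]; ring
  rw [← Finset.sum_subset (Finset.subset_univ ({0, ⟨m, by omega⟩} : Finset (Fin (m+1))))
    (fun x _ hx => hzero x hx)]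
  have hne : (0 : Fin (m+1)) ≠ ⟨m, by omega⟩ := by
    intro h; have := Fin.mk.injEq .. ▸ h; simp [Fin.ext_iff] at h; omega
  rw [Finset.sum_pair hne]
  -- first term
  have hminor0 : (N.submatrix (Fin.succAbove 0) Fin.succ).det = 1 := by
    have htri : (N.submatrix (Fin.succAbove 0) Fin.succ).BlockTriangular id := by
      intro r s hrs
      simp only [id] at hrs
      simp only [Matrix.submatrix_apply, hN]
      rw [if_neg]
      push_neg
      constructor
      · intro h
        exact absurd (Fin.succ_injective _ (by simpa [Fin.succAbove] using h)) (by
          intro h'; rw [h'] at hrs; exact lt_irrefl _ hrs)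
      · have h1 : ((Fin.succ s : Fin (m+1)) : ℕ) = (s:ℕ)+1 := rfl
        have h2 : ((Fin.succAbove 0 r : Fin (m+1)) : ℕ) = (r:ℕ)+1 := by
          simp [Fin.succAbove, Fin.lt_iff_val_lt_val]
        rw [h1, h2]
        have hr : (r:ℕ) < m := r.isLt
        have hs : (s:ℕ) < m := s.isLt
        have hsr : (s:ℕ) < (r:ℕ) := hrs
        rcases Nat.lt_or_ge ((r:ℕ)+2) (m+1) with h | h
        · rw [Nat.mod_eq_of_lt h]; omega
        · have : (r:ℕ) + 2 = m + 1 := by omega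
          rw [this, Nat.mod_self]; omega
    rw [Matrix.det_of_upperTriangular htri]
    apply Finset.prod_eq_one
    intro r _
    simp only [Matrix.submatrix_apply, hN]
    rw [if_pos]
    left; rfl
  have hminorm : (N.submatrix (Fin.succAbove ⟨m, by omega⟩) Fin.succ).det = 1 := by
    have hcast : ∀ r : Fin m, (((⟨m, by omega⟩ : Fin (m+1)).succAbove r : Fin (m+1)) : ℕ) = (r:ℕ) := by
      intro r
      simp [Fin.succAbove, Fin.lt_iff_val_lt_val, r.isLt]
    have htri : (N.submatrix (Fin.succAbove ⟨m, by omega⟩) Fin.succ).BlockTriangular OrderDual.toDual := by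
      intro r s hrs
      have hrs' : (r:Fin m) < s := hrs
      have hrsv : (r:ℕ) < (s:ℕ) := hrs'
      simp only [Matrix.submatrix_apply, hN]
      rw [if_neg]
      rintro (h | h)
      · have := congrArg Fin.val h
        rw [hcast] at this
        have h1 : ((Fin.succ s : Fin (m+1)) : ℕ) = (s:ℕ)+1 := rfl
        rw [h1] at this
        omega
      · have h1 : ((Fin.succ s : Fin (m+1)) : ℕ) = (s:ℕ)+1 := rfl
        rw [h1, hcast, Nat.mod_eq_of_lt (by omega : (r:ℕ)+1 < m+1)] at h
        omega
    rw [Matrix.det_of_lowerTriangular _ htri]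
    apply Finset.prod_eq_one
    intro r _
    simp only [Matrix.submatrix_apply, hN]
    rw [if_pos]
    right
    have h1 : ((Fin.succ r : Fin (m+1)) : ℕ) = (r:ℕ)+1 := rfl
    rw [h1, hcast, Nat.mod_eq_of_lt (by omega : (r:ℕ)+1 < m+1)]
  have hN00 : N 0 0 = 1 := by rw [hN, if_pos]; left; rfl
  have hNm0 : N ⟨m, by omega⟩ 0 = 1 := by
    rw [hN, if_pos]
    right
    rw [hlast, Fin.val_zero, Nat.mod_self]
  rw [hminor0, hminorm, hN00, hNm0, hlast, Fin.val_zero]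
  ring

open Matrix in
lemma detCycle' (l : ℕ) (hl : 3 ≤ l) (N : Matrix (Fin l) (Fin l) ℤ)
    (hN : ∀ i j, N i j = if i = j ∨ (j:ℕ) = ((i:ℕ)+1) % l then 1 else 0) :
    N.det = 1 + (-1)^(l-1) := by
  obtain ⟨m, rfl⟩ : ∃ m, l = m + 1 := ⟨l - 1, by omega⟩
  have := detCycle m (by omega) N hN
  simpa using this

open Matrix Finset in
lemma main_det (n : ℕ) (G : SimpleGraph (Fin n))
    (hconn : G.Connected) (e : Fin n ≃ G.edgeSet)
    (A : Matrix (Fin n) (Fin n) ℤ)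
    (hA : ∀ v j, A v j = if v ∈ (e j : Sym2 (Fin n)) then 1 else 0)
    {u : Fin n} (c : G.Walk u u) (hc : c.IsCycle) :
    ∃ ε : ℤˣ, A.det = (ε : ℤ) * (1 + (-1)^(c.length - 1)) := by
  set l := c.length with hldef
  have hl3 : 3 ≤ l := hc.three_le_length
  have hlpos : 0 < l := by omega
  have hsuplen : c.support.length = l + 1 := by
    rw [SimpleGraph.Walk.length_support]
  have hinj : ∀ a b : ℕ, 1 ≤ a → a ≤ l → 1 ≤ b → b ≤ l →
      c.getVert a = c.getVert b → a = b := by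
    intro a b ha1 ha2 hb1 hb2 hab
    obtain ⟨a', rfl⟩ : ∃ a', a = a' + 1 := ⟨a - 1, by omega⟩
    obtain ⟨b', rfl⟩ : ∃ b', b = b' + 1 := ⟨b - 1, by omega⟩
    have hta : a' < c.support.tail.length := by
      rw [List.length_tail, hsuplen]; omega
    have htb : b' < c.support.tail.length := by
      rw [List.length_tail, hsuplen]; omega
    have hga : c.getVert (a' + 1) = c.support.tail.get ⟨a', hta⟩ := by
      rw [walk_getVert_support_get c (a'+1) (by rw [hsuplen]; omega)]
      exact (List.get_tail _ _ _ (by rw [hsuplen]; omega)).symm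
    have hgb : c.getVert (b' + 1) = c.support.tail.get ⟨b', htb⟩ := by
      rw [walk_getVert_support_get c (b'+1) (by rw [hsuplen]; omega)]
      exact (List.get_tail _ _ _ (by rw [hsuplen]; omega)).symm
    rw [hga, hgb] at hab
    have := (List.Nodup.get_inj_iff hc.support_nodup).mp hab
    simp only [Fin.mk.injEq] at this
    omega
  have hgv0 : c.getVert 0 = u := c.getVert_zero
  have hgvl : c.getVert l = u := c.getVert_length
  set w : Fin l → Fin n := fun i => c.getVert ((i:ℕ)+1) with hwdef
  have hw_inj : Function.Injective w := by
    intro i j hij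
    have := hinj ((i:ℕ)+1) ((j:ℕ)+1) (by omega) (by omega : (i:ℕ)+1 ≤ l) (by omega)
      (by omega : (j:ℕ)+1 ≤ l) hij
    exact Fin.ext (by omega)
  set E : Fin l → Sym2 (Fin n) := fun i => s(c.getVert (i:ℕ), c.getVert ((i:ℕ)+1)) with hEdef
  have hEedge : ∀ i, E i ∈ G.edgeSet := by
    intro i
    exact (c.adj_getVert_succ i.isLt)
  have hE_get : ∀ i : Fin l, E i = c.edges.get ⟨(i:ℕ), by rw [SimpleGraph.Walk.length_edges]; exact i.isLt⟩ := by
    intro i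
    rw [walk_edges_get]
  have hE_inj : Function.Injective E := by
    intro i j hij
    rw [hE_get i, hE_get j] at hij
    have := (List.Nodup.get_inj_iff hc.edges_nodup).mp hij
    simp only [Fin.mk.injEq] at this
    exact Fin.ext this
  have hwE : ∀ i, w i ∈ E i := fun i => Sym2.mem_mk_right _ _
  -- support membership
  have hmem_sup : ∀ v : Fin n, v ∈ c.support ↔ ∃ i : Fin l, w i = v := by
    intro v
    rw [SimpleGraph.Walk.mem_support_iff_exists_getVert]
    constructor
    · rintro ⟨k, hk, hkl⟩
      rcases Nat.eq_zero_or_pos k with rfl | hkpos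
      · refine ⟨⟨l - 1, by omega⟩, ?_⟩
        show c.getVert (l - 1 + 1) = v
        rw [(by omega : l - 1 + 1 = l), hgvl, ← hgv0, hk]
      · exact ⟨⟨k - 1, by omega⟩, by
          show c.getVert (k - 1 + 1) = v
          rw [(by omega : k - 1 + 1 = k), hk]⟩
    · rintro ⟨i, rfl⟩
      exact ⟨(i:ℕ)+1, rfl, by omega⟩
  classical
  set S : Finset (Fin n) := c.support.toFinset with hSdef
  have hmemS : ∀ v, v ∈ S ↔ ∃ i : Fin l, w i = v := by
    intro v; rw [hSdef, List.mem_toFinset]; exact hmem_sup v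
  have hwS : ∀ i, w i ∈ S := fun i => (hmemS _).mpr ⟨i, rfl⟩
  have hE_sub : ∀ (i : Fin l) (x : Fin n), x ∈ E i → x ∈ S := by
    intro i x hx
    rw [hEdef] at hx
    rw [Sym2.mem_iff] at hx
    rw [hSdef, List.mem_toFinset, SimpleGraph.Walk.mem_support_iff_exists_getVert]
    rcases hx with rfl | rfl
    · exact ⟨(i:ℕ), rfl, by omega⟩
    · exact ⟨(i:ℕ)+1, rfl, by omega⟩
  have hSne : S.Nonempty := ⟨u, by rw [hSdef, List.mem_toFinset]; exact c.start_mem_support⟩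
  -- distance to the cycle
  set d : Fin n → ℕ := fun v => (S.image (G.dist v)).min' (hSne.image _) with hddef
  have hd_le : ∀ v, ∀ s ∈ S, d v ≤ G.dist v s := by
    intro v s hs
    exact Finset.min'_le _ _ (Finset.mem_image_of_mem _ hs)
  have hd_mem : ∀ v, ∃ s ∈ S, G.dist v s = d v := by
    intro v
    have := Finset.min'_mem (S.image (G.dist v)) (hSne.image _)
    rw [Finset.mem_image] at this
    exact this
  have hdS : ∀ v ∈ S, d v = 0 := by
    intro v hv
    have h1 := hd_le v v hv
    simpa [SimpleGraph.dist_self] using h1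
  have hd_pos : ∀ v, v ∉ S → 0 < d v := by
    intro v hv
    rcases Nat.eq_zero_or_pos (d v) with h0 | h
    · obtain ⟨s, hs, hds⟩ := hd_mem v
      rw [h0] at hds
      rw [(hconn.dist_eq_zero_iff).mp hds] at hv
      exact absurd hs hv
    · exact h
  have hparent : ∀ v, v ∉ S → ∃ x, G.Adj v x ∧ d x + 1 = d v := by
    intro v hv
    obtain ⟨s, hs, hds⟩ := hd_mem v
    have hdv : 0 < d v := hd_pos v hv
    obtain ⟨p, hp⟩ := (hconn.preconnected v s).exists_walk_length_eq_dist
    rw [hds] at hp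
    cases p with
    | nil => rw [← hp] at hdv; simp at hdv
    | cons hadj q =>
      rename_i x
      refine ⟨x, hadj, le_antisymm ?_ ?_⟩
      · have h1 : d x ≤ G.dist x s := hd_le x s hs
        have h2 : G.dist x s ≤ q.length := SimpleGraph.dist_le q
        have h3 : q.length + 1 = d v := by
          simpa [SimpleGraph.Walk.length_cons] using hp
        omega
      · obtain ⟨s', hs', hds'⟩ := hd_mem x
        have h1 : d v ≤ G.dist v s' := hd_le v s' hs'
        have h2 : G.dist v s' ≤ G.dist v x + G.dist x s' := hconn.dist_triangle
        have h3 : G.dist v x ≤ 1 := SimpleGraph.dist_le (SimpleGraph.Walk.cons hadj SimpleGraph.Walk.nil)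
        omega
  -- parent function
  set pv : Fin n → Fin n := fun v => if hv : v ∈ S then v else (hparent v hv).choose with hpvdef
  have hpv_adj : ∀ v (hv : v ∉ S), G.Adj v (pv v) := by
    intro v hv
    rw [hpvdef]
    simp only [dif_neg hv]
    exact (hparent v hv).choose_spec.1
  have hpv_d : ∀ v (hv : v ∉ S), d (pv v) + 1 = d v := by
    intro v hv
    rw [hpvdef]
    simp only [dif_neg hv]
    exact (hparent v hv).choose_spec.2
  -- index of a cycle vertex
  set idx : Fin n → Fin l := fun v => if hv : v ∈ S then ((hmemS v).mp hv).choose else ⟨0, hlpos⟩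
    with hidxdef
  have hidx : ∀ v (hv : v ∈ S), w (idx v) = v := by
    intro v hv
    rw [hidxdef]
    simp only [dif_pos hv]
    exact ((hmemS v).mp hv).choose_spec
  have hidxw : ∀ i : Fin l, idx (w i) = i := by
    intro i
    exact hw_inj (hidx (w i) (hwS i))
  -- the edge assignment
  set φ : Fin n → Sym2 (Fin n) := fun v => if v ∈ S then E (idx v) else s(v, pv v) with hφdef
  have hφedge : ∀ v, φ v ∈ G.edgeSet := by
    intro v
    rw [hφdef]
    by_cases hv : v ∈ S
    · simp only [if_pos hv]; exact hEedge _
    · simp only [if_neg hv]; exact (hpv_adj v hv)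
  have hφ_self : ∀ v, v ∉ S → v ∈ φ v := by
    intro v hv
    rw [hφdef]
    simp only [if_neg hv]
    exact Sym2.mem_mk_left _ _
  have hφ_inj : Function.Injective φ := by
    intro v v' hvv'
    by_cases hv : v ∈ S <;> by_cases hv' : v' ∈ S
    · rw [hφdef] at hvv'
      simp only [if_pos hv, if_pos hv'] at hvv'
      rw [← hidx v hv, ← hidx v' hv', hE_inj hvv']
    · exfalso
      have : v' ∈ φ v := hvv' ▸ hφ_self v' hv'
      rw [hφdef] at this
      simp only [if_pos hv] at this
      exact hv' (hE_sub _ _ this)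
    · exfalso
      have : v ∈ φ v' := hvv' ▸ hφ_self v hv
      rw [hφdef] at this
      simp only [if_pos hv'] at this
      exact hv (hE_sub _ _ this)
    · rw [hφdef] at hvv'
      simp only [if_neg hv, if_neg hv'] at hvv'
      rw [Sym2.eq_iff] at hvv'
      rcases hvv' with ⟨h1, _⟩ | ⟨h1, h2⟩
      · exact h1
      · exfalso
        have hd1 := hpv_d v hv
        have hd2 := hpv_d v' hv'
        rw [← h1] at hd2
        rw [h2] at hd1
        omega
  -- the column permutation
  have hτbij : Function.Bijective (fun v => e.symm ⟨φ v, hφedge v⟩) := by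
    rw [Fintype.bijective_iff_injective_and_card]
    refine ⟨?_, rfl⟩
    intro v v' h
    have := e.symm.injective h
    exact hφ_inj (congrArg Subtype.val this)
  set τ : Equiv.Perm (Fin n) := Equiv.ofBijective _ hτbij with hτdef
  set M : Matrix (Fin n) (Fin n) ℤ := A.submatrix id τ with hMdef
  have hM : ∀ v x, M v x = if v ∈ φ x then 1 else 0 := by
    intro v x
    rw [hMdef]
    simp only [Matrix.submatrix_apply, id]
    rw [hA]
    have : e (τ x) = ⟨φ x, hφedge x⟩ := by
      rw [hτdef]
      show e (e.symm _) = _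
      exact e.apply_symm_apply _
    rw [this]
  have hn : 0 < n := Fin.pos u
  -- the block weighting
  set b : Fin n → ℕ := fun v => if v ∈ S then 0 else d v * n + (v:ℕ) with hbdef
  have hb0 : ∀ v, b v = 0 ↔ v ∈ S := by
    intro v
    rw [hbdef]
    by_cases hv : v ∈ S
    · simp [hv]
    · simp only [if_neg hv]
      have := hd_pos v hv
      constructor
      · intro h
        exfalso
        have : n ≤ d v * n := Nat.le_mul_of_pos_left n this
        omega
      · intro h; exact absurd h hv
  have hbS : ∀ v ∈ S, b v = 0 := fun v hv => (hb0 v).mpr hv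
  have htri : M.BlockTriangular b := by
    intro x y hxy
    rw [hM]
    rw [if_neg]
    intro hxφ
    rw [hφdef] at hxφ
    by_cases hy : y ∈ S
    · simp only [if_pos hy] at hxφ
      have hx : x ∈ S := hE_sub _ _ hxφ
      rw [hbS x hx] at hxy
      omega
    · simp only [if_neg hy] at hxφ
      rw [Sym2.mem_iff] at hxφ
      rcases hxφ with rfl | rfl
      · exact absurd hxy (lt_irrefl _)
      · -- x = pv y, show b (pv y) ≤ b y for contradiction
        have hby : b y = d y * n + (y:ℕ) := by rw [hbdef]; simp [if_neg hy]
        have hd1 := hpv_d y hy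
        by_cases hpy : pv y ∈ S
        · rw [hbS _ hpy] at hxy; omega
        · have hbpy : b (pv y) = d (pv y) * n + ((pv y):ℕ) := by
            rw [hbdef]; simp [if_neg hpy]
          have h1 : ((pv y):ℕ) < n := (pv y).isLt
          have h2 : d (pv y) * n + n = (d (pv y) + 1) * n := by ring
          have h3 : (d (pv y) + 1) * n = d y * n := by rw [hd1]
          omega
  rw [hMdef] at htri
  have hdetM := htri.det
  rw [← hMdef] at hdetM
  -- entries of the cycle block
  have hwv : ∀ i : Fin l, w i = c.getVert ((i:ℕ)+1) := fun _ => rfl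
  have hmemE : ∀ i j : Fin l, w i ∈ E j ↔ (i = j ∨ (j:ℕ) = ((i:ℕ)+1) % l) := by
    intro i j
    rw [hEdef]
    simp only []
    rw [Sym2.mem_iff, hwv]
    constructor
    · rintro (h | h)
      · by_cases hj : (j:ℕ) = 0
        · right
          rw [hj, hgv0] at h
          have h' : c.getVert ((i:ℕ)+1) = c.getVert l := by rw [hgvl]; exact h
          have hil := hinj ((i:ℕ)+1) l (by omega) (by omega) (by omega) (le_refl l) h'
          rw [hil, Nat.mod_self]
          exact hj
        · right
          have := hinj ((i:ℕ)+1) (j:ℕ) (by omega) (by omega) (by omega) (le_of_lt j.isLt) h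
          rw [← this, Nat.mod_eq_of_lt (by omega : (i:ℕ)+1 < l)]
      · left
        have := hinj ((i:ℕ)+1) ((j:ℕ)+1) (by omega) (by omega) (by omega) (by omega : (j:ℕ)+1 ≤ l) h
        exact Fin.ext (by omega)
    · rintro (rfl | h)
      · right; rfl
      · by_cases hi : (i:ℕ)+1 = l
        · left
          rw [hi, Nat.mod_self] at h
          have hj0 : (j:ℕ) = 0 := h
          rw [hi, hgvl, hj0, hgv0]
        · left
          rw [Nat.mod_eq_of_lt (by omega : (i:ℕ)+1 < l)] at h
          rw [h]
  -- the cycle block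
  have hgbij : Function.Bijective (fun i : Fin l => (⟨w i, hbS _ (hwS i)⟩ : {v // b v = 0})) := by
    constructor
    · intro i j hij
      exact hw_inj (congrArg Subtype.val hij)
    · rintro ⟨v, hv⟩
      obtain ⟨i, hi⟩ := (hmemS v).mp ((hb0 v).mp hv)
      exact ⟨i, Subtype.ext hi⟩
  set g : Fin l ≃ {v // b v = 0} := Equiv.ofBijective _ hgbij with hgdef
  have hblock0 : (M.toSquareBlock b 0).det = 1 + (-1)^(l-1) := by
    rw [← Matrix.det_submatrix_equiv_self g]
    apply detCycle' l hl3
    intro i j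
    have hentry : ((M.toSquareBlock b 0).submatrix (⇑g) (⇑g)) i j = M (w i) (w j) := rfl
    rw [hentry, hM]
    have hφwj : φ (w j) = E j := by
      rw [hφdef]
      simp only [if_pos (hwS j)]
      rw [hidxw]
    rw [hφwj]
    exact if_congr (hmemE i j) rfl rfl
  -- other blocks are trivial
  have hblocks : ∀ a ∈ Finset.univ.image b, a ≠ 0 → (M.toSquareBlock b a).det = 1 := by
    intro a ha hane
    obtain ⟨v₁, -, hv₁⟩ := Finset.mem_image.mp ha
    have hnotS : ∀ x : Fin n, b x = a → x ∉ S := fun x hx hxS =>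
      hane (by rw [← hx, hbS x hxS])
    haveI : Subsingleton {x // b x = a} := by
      constructor
      rintro ⟨x, hx⟩ ⟨y, hy⟩
      have hxS := hnotS x hx
      have hyS := hnotS y hy
      have hbx : b x = d x * n + (x:ℕ) := by rw [hbdef]; simp [if_neg hxS]
      have hby : b y = d y * n + (y:ℕ) := by rw [hbdef]; simp [if_neg hyS]
      have heq : d x * n + (x:ℕ) = d y * n + (y:ℕ) := by rw [← hbx, ← hby, hx, hy]
      have hmx : (d x * n + (x:ℕ)) % n = (x:ℕ) := by
        rw [mul_comm, Nat.mul_add_mod, Nat.mod_eq_of_lt x.isLt]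
      have hmy : (d y * n + (y:ℕ)) % n = (y:ℕ) := by
        rw [mul_comm, Nat.mul_add_mod, Nat.mod_eq_of_lt y.isLt]
      apply Subtype.ext
      apply Fin.ext
      rw [← hmx, ← hmy, heq]
    haveI : Unique {x // b x = a} := uniqueOfSubsingleton ⟨v₁, hv₁⟩
    rw [Matrix.det_unique]
    set x₀ : {x // b x = a} := default with hx₀
    have hx₀S : (x₀ : Fin n) ∉ S := hnotS _ x₀.2
    show M (x₀ : Fin n) (x₀ : Fin n) = 1
    rw [hM]
    rw [if_pos (hφ_self _ hx₀S)]
  have h0mem : (0:ℕ) ∈ Finset.univ.image b :=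
    Finset.mem_image.mpr ⟨w ⟨0, hlpos⟩, Finset.mem_univ _, hbS _ (hwS _)⟩
  rw [Finset.prod_eq_single_of_mem 0 h0mem hblocks, hblock0] at hdetM
  -- conclude
  have hperm : M.det = (Equiv.Perm.sign τ : ℤ) * A.det := by
    rw [hMdef]
    exact Matrix.det_permute' τ A
  rw [hperm] at hdetM
  refine ⟨Equiv.Perm.sign τ, ?_⟩
  rcases Int.units_eq_one_or (Equiv.Perm.sign τ) with h | h <;>
    rw [h] at hdetM ⊢ <;> simp only [Units.val_one, Units.val_neg, one_mul] at hdetM ⊢ <;> omega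


/-- Classification of square-free quadratic monomial Cremona sets: let `G` be a
connected simple graph on `n` vertices with exactly `n` edges, and `A` its `n × n`
vertex-edge incidence matrix. Then `det A = ± 2` iff `G` contains an odd cycle (its
unique cycle is odd), and if `G` contains an even cycle then `det A = 0`. -/
theorem quadratic_cremona_classification (n : ℕ) (G : SimpleGraph (Fin n))
    (hconn : G.Connected) (e : Fin n ≃ G.edgeSet)
    (A : Matrix (Fin n) (Fin n) ℤ)
    (hA : ∀ v j, A v j = if v ∈ (e j : Sym2 (Fin n)) then 1 else 0) :
    ((A.det = 2 ∨ A.det = -2) ↔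
      ∃ (v : Fin n) (c : G.Walk v v), c.IsCycle ∧ Odd c.length) ∧
    ((∃ (v : Fin n) (c : G.Walk v v), c.IsCycle ∧ Even c.length) → A.det = 0) := by
  have heven_case : ∀ (v : Fin n) (c : G.Walk v v), c.IsCycle → Even c.length → A.det = 0 := by
    intro v c hcyc heven
    obtain ⟨ε, hε⟩ := main_det n G hconn e A hA c hcyc
    have h3 := hcyc.three_le_length
    have hoddlen : Odd (c.length - 1) := by
      obtain ⟨k, hk⟩ := heven
      exact ⟨k - 1, by omega⟩
    rw [Odd.neg_one_pow hoddlen] at hε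
    simpa using hε
  constructor
  · constructor
    · intro hdet
      by_contra hno
      push_neg at hno
      have hnotac : ¬ G.IsAcyclic := by
        intro hac
        have htree : G.IsTree := ⟨hconn, hac⟩
        haveI : Fintype G.edgeSet := Fintype.ofEquiv _ e
        have hcard := htree.card_edgeFinset
        have hce : G.edgeFinset.card = n := by
          rw [SimpleGraph.edgeFinset_card]
          exact (Fintype.card_congr e.symm).trans (Fintype.card_fin n)
        rw [Fintype.card_fin] at hcard
        omega
      rw [SimpleGraph.IsAcyclic] at hnotac
      push_neg at hnotac
      obtain ⟨v, c, hcyc⟩ := hnotac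
      have heven : Even c.length := Nat.not_odd_iff_even.mp (by
        intro hodd
        exact (hno v c hcyc) hodd)
      have := heven_case v c hcyc heven
      rcases hdet with h | h <;> omega
    · rintro ⟨v, c, hcyc, hodd⟩
      obtain ⟨ε, hε⟩ := main_det n G hconn e A hA c hcyc
      have h3 := hcyc.three_le_length
      have hevenlen : Even (c.length - 1) := by
        obtain ⟨k, hk⟩ := hodd
        exact ⟨k, by omega⟩
      rw [Even.neg_one_pow hevenlen] at hε
      rcases Int.units_eq_one_or ε with h | h <;> rw [h] at hε <;>
        simp only [Units.val_one, Units.val_neg, one_mul] at hε <;> omega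
  · rintro ⟨v, c, hcyc, heven⟩
    exact heven_case v c hcyc heven
end
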